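/- Let R = ℂ[x,y] and m = (x,y). There exists an injective map from ℂ^46 to the set of chains of ideals of R, sending a parameter tuple (a_1,…,a_46) to a chain I_1 ⊇ I_2 ⊇ ⋯ ⊇ I_23 of ideals of R with the following properties for every parameter value: (i) m^7 ⊆ I_i ⊆ m for every 1 ≤ i ≤ 23 (so every I_i defines a subscheme of 𝔸² supported only at the origin); (ii) dim_ℂ(ℂ[x,y]/I_i) = i for every 1 ≤ i ≤ 23. -/

import Mathlib

/-!
For a space `V` of forms of degree `k` in `K[x, y]`, the ideal `I = V + m ^ (k + 1)` is, as a
vector space, `V ⊕ (span of monomials of degree > k)`; hence `V = I ∩ K[x, y]_{≤ k}` is recovered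
from `I` and `dim K[x, y] / I = (k + 2).choose 2 - dim V`. A chain of colengths `1, …, 23` is
obtained by running, for `k = 0, …, 6`, through a flag `V_{k, k + 1} ⊃ V_{k, k} ⊃ ⋯` of subspaces
of degree-`k` forms, with `dim V_{k, d} = d` (for `k = 6` only the two largest proper members are
used). Each `V_{k, d - 1}` is taken in an affine chart of hyperplanes of `V_{k, d}`, with `d - 1`
coordinates; these are read off the echelon basis of `V_{k, d - 1}`, so the flags, and hence the
chain, determine all `1 + 3 + 6 + 10 + 15 + (6 + 5) = 46` coordinates.
-/

open MvPolynomial Module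

section Echelon

variable {K M ι : Type*} [Field K] [AddCommGroup M] [Module K M] [Fintype ι] [DecidableEq ι]

lemma linearIndependent_of_map_eq_single (π : M →ₗ[K] ι → K) {v : ι → M}
    (hv : ∀ i, π (v i) = Pi.single i 1) : LinearIndependent K v :=
  LinearIndependent.of_comp π <| by
    convert (Pi.basisFun K ι).linearIndependent
    ext1 i
    simp [hv]

/-- An echelon basis is determined by its span. -/
lemma eq_of_span_eq_of_map_eq_single (π : M →ₗ[K] ι → K) {v w : ι → M}
    (hv : ∀ i, π (v i) = Pi.single i 1) (hw : ∀ i, π (w i) = Pi.single i 1)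
    (h : Submodule.span K (Set.range v) = Submodule.span K (Set.range w)) : v = w := by
  funext i
  obtain ⟨c, hc⟩ := (Submodule.mem_span_range_iff_exists_fun K).mp
    (h ▸ Submodule.subset_span (Set.mem_range_self i) : v i ∈ Submodule.span K (Set.range w))
  have hc' : c = Pi.single i 1 := by
    ext j
    simpa [hw, hv, Pi.single_apply] using congrFun (congrArg π hc) j
  simp [← hc, hc', Pi.single_apply]

end Echelon

namespace MvPolynomial

variable {σ K : Type*} [Field K]

lemma degree_eq_of_isHomogeneous {p : MvPolynomial σ K} {n : ℕ} (hp : p.IsHomogeneous n)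
    {μ : σ →₀ ℕ} (hμ : μ ∈ p.support) : μ.degree = n := by
  rw [Finsupp.degree_eq_weight_one]
  exact hp (mem_support_iff.mp hμ)

lemma mem_pow_idealOfVars_of_isHomogeneous {p : MvPolynomial σ K} {n : ℕ}
    (hp : p.IsHomogeneous n) : p ∈ idealOfVars σ K ^ n :=
  (mem_pow_idealOfVars_iff n p).mpr fun _ hμ => (degree_eq_of_isHomogeneous hp hμ).ge

lemma homogeneousSubmodule_le_restrictSupport (k : ℕ) :
    homogeneousSubmodule σ K k ≤ restrictSupport K {μ | μ.degree ≤ k} :=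
  fun _ hp _ hμ => (degree_eq_of_isHomogeneous hp hμ).le

lemma sub_C_constantCoeff_mem_idealOfVars (r : MvPolynomial σ K) :
    r - C (constantCoeff r) ∈ idealOfVars σ K := by
  rw [← pow_one (idealOfVars σ K), mem_pow_idealOfVars_iff']
  intro μ hμ
  obtain rfl : μ = 0 := (Finsupp.degree_eq_zero_iff μ).mp (by omega)
  simp [constantCoeff]

lemma mul_sub_smul_mem_pow_idealOfVars {v : MvPolynomial σ K} {k : ℕ} (hv : v.IsHomogeneous k)
    (r : MvPolynomial σ K) : r * v - constantCoeff r • v ∈ idealOfVars σ K ^ (k + 1) := by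
  rw [smul_eq_C_mul, ← sub_mul, pow_succ']
  exact Ideal.mul_mem_mul (sub_C_constantCoeff_mem_idealOfVars r)
    (mem_pow_idealOfVars_of_isHomogeneous hv)

lemma restrictScalars_pow_idealOfVars (n : ℕ) :
    (idealOfVars σ K ^ n).restrictScalars K = restrictSupport K {μ | n ≤ μ.degree} := by
  ext p
  rw [Submodule.restrictScalars_mem, mem_pow_idealOfVars_iff, mem_restrictSupport_iff]
  rfl

lemma restrictSupport_union (s t : Set (σ →₀ ℕ)) :
    restrictSupport K (s ∪ t) = restrictSupport K s ⊔ restrictSupport K t := by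
  simp only [restrictSupport_eq_span, Set.image_union, Submodule.span_union]

lemma disjoint_restrictSupport {s t : Set (σ →₀ ℕ)} (h : Disjoint s t) :
    Disjoint (restrictSupport K s) (restrictSupport K t) := by
  rw [Submodule.disjoint_def]
  intro p hs ht
  rw [← support_eq_empty, ← Finset.coe_eq_empty]
  exact Set.subset_empty_iff.mp (h.inter_eq ▸ Set.subset_inter hs ht)

noncomputable def idealOfForms (k : ℕ) (V : Submodule K (MvPolynomial σ K)) :
    Ideal (MvPolynomial σ K) :=
  Ideal.span V ⊔ idealOfVars σ K ^ (k + 1)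

lemma idealOfForms_mono {k : ℕ} {V W : Submodule K (MvPolynomial σ K)} (h : V ≤ W) :
    idealOfForms k V ≤ idealOfForms k W :=
  sup_le_sup_right (Ideal.span_mono h) _

lemma pow_idealOfVars_le_idealOfForms {k n : ℕ} (h : k + 1 ≤ n)
    (V : Submodule K (MvPolynomial σ K)) : idealOfVars σ K ^ n ≤ idealOfForms k V :=
  (Ideal.pow_le_pow_right h).trans le_sup_right

lemma idealOfForms_succ_le {k : ℕ} {V : Submodule K (MvPolynomial σ K)}
    (hV : V ≤ homogeneousSubmodule σ K (k + 1)) (W : Submodule K (MvPolynomial σ K)) :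
    idealOfForms (k + 1) V ≤ idealOfForms k W :=
  sup_le (Ideal.span_le.mpr fun _ hv => Ideal.mem_sup_right (mem_pow_idealOfVars_of_isHomogeneous
    (hV hv))) (pow_idealOfVars_le_idealOfForms (by omega) W)

lemma idealOfForms_le_idealOfVars {k : ℕ} {V : Submodule K (MvPolynomial σ K)}
    (hV : V ≤ (idealOfVars σ K).restrictScalars K) : idealOfForms k V ≤ idealOfVars σ K :=
  sup_le (Ideal.span_le.mpr hV) (Ideal.pow_le_self k.succ_ne_zero)

variable {k : ℕ} {V : Submodule K (MvPolynomial σ K)}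

lemma restrictScalars_idealOfForms (hV : V ≤ homogeneousSubmodule σ K k) :
    (idealOfForms k V).restrictScalars K =
      V ⊔ (idealOfVars σ K ^ (k + 1)).restrictScalars K := by
  set P := V ⊔ (idealOfVars σ K ^ (k + 1)).restrictScalars K
  have mul_mem (r : MvPolynomial σ K) {p} (hp : p ∈ P) : r * p ∈ P := by
    obtain ⟨v, hv, q, hq, rfl⟩ := Submodule.mem_sup.mp hp
    have hrv : r * v = constantCoeff r • v + (r * v - constantCoeff r • v) := by abel
    rw [mul_add, hrv, add_assoc]
    exact Submodule.add_mem_sup (V.smul_mem _ hv) <| Submodule.add_mem _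
      (mul_sub_smul_mem_pow_idealOfVars (hV hv) r) (Ideal.mul_mem_left _ r hq)
  refine le_antisymm (fun p hp => ?_)
    (sup_le (fun v hv => Ideal.mem_sup_left (Ideal.subset_span hv)) fun p hp =>
      Ideal.mem_sup_right hp)
  obtain ⟨s, hs, t, ht, rfl⟩ :=
    Submodule.mem_sup.mp ((Submodule.restrictScalars_mem _ _ _).mp hp)
  refine P.add_mem ?_ (Submodule.mem_sup_right ht)
  clear hp
  induction hs using Submodule.span_induction with
  | mem x hx => exact Submodule.mem_sup_left hx
  | zero => exact P.zero_mem
  | add x y _ _ hx hy => exact P.add_mem hx hy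
  | smul r x _ hx => exact mul_mem r hx

lemma restrictScalars_idealOfForms_inf_restrictSupport (hV : V ≤ homogeneousSubmodule σ K k) :
    (idealOfForms k V).restrictScalars K ⊓ restrictSupport K {μ | μ.degree ≤ k} = V := by
  have hdisj : Disjoint {μ : σ →₀ ℕ | k + 1 ≤ μ.degree} {μ | μ.degree ≤ k} :=
    Set.disjoint_left.mpr fun μ (h₁ : k + 1 ≤ μ.degree) (h₂ : μ.degree ≤ k) => by omega
  rw [restrictScalars_idealOfForms hV,
    sup_inf_assoc_of_le _ (hV.trans (homogeneousSubmodule_le_restrictSupport k)),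
    restrictScalars_pow_idealOfVars, (disjoint_restrictSupport hdisj).eq_bot, sup_bot_eq]

/-- `K[σ] ⧸ (V + m ^ (k + 1)) ≅ K[σ]_{≤ k} ⧸ V`. -/
lemma finrank_quotient_idealOfForms [Finite σ] (hV : V ≤ homogeneousSubmodule σ K k) :
    finrank K (MvPolynomial σ K ⧸ idealOfForms k V) =
      finrank K (restrictSupport K {μ : σ →₀ ℕ | μ.degree ≤ k}) - finrank K V := by
  set L := restrictSupport K {μ : σ →₀ ℕ | μ.degree ≤ k}
  set I := (idealOfForms k V).restrictScalars K
  have : Finite {μ : σ →₀ ℕ | μ.degree ≤ k} := (Finsupp.finite_of_degree_le k).to_subtype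
  have : Module.Finite K L := .of_basis (basisRestrictSupport K _)
  let f : L →ₗ[K] MvPolynomial σ K ⧸ I := I.mkQ ∘ₗ L.subtype
  have hL : L ⊔ (idealOfVars σ K ^ (k + 1)).restrictScalars K = ⊤ := by
    rw [restrictScalars_pow_idealOfVars, ← restrictSupport_union, eq_top_iff,
      ← restrictSupport_univ]
    exact restrictSupport_mono (R := K) fun μ _ =>
      show μ.degree ≤ k ∨ k + 1 ≤ μ.degree by omega
  have hf : Function.Surjective f := by
    intro q
    obtain ⟨p, rfl⟩ := I.mkQ_surjective q
    obtain ⟨l, hl, h, hh, rfl⟩ := Submodule.mem_sup.mp (hL ▸ Submodule.mem_top (x := p))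
    refine ⟨⟨l, hl⟩, (Submodule.Quotient.eq I).mpr ?_⟩
    simpa using I.neg_mem (Ideal.mem_sup_right hh)
  have hker : LinearMap.ker f = V.comap L.subtype := by
    rw [← restrictScalars_idealOfForms_inf_restrictSupport hV, Submodule.comap_inf,
      Submodule.comap_subtype_self, inf_top_eq, LinearMap.ker_comp, Submodule.ker_mkQ]
  have hVL : V ≤ L := hV.trans (homogeneousSubmodule_le_restrictSupport k)
  calc finrank K (MvPolynomial σ K ⧸ idealOfForms k V)
      = finrank K (L ⧸ LinearMap.ker f) :=
        ((Submodule.Quotient.restrictScalarsEquiv K _).symm.trans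
          (f.quotKerEquivOfSurjective hf).symm).finrank_eq
    _ = finrank K L - finrank K V := by
        rw [← (Submodule.comapSubtypeEquivOfLe hVL).finrank_eq, ← hker,
          ← Submodule.finrank_quotient_add_finrank (LinearMap.ker f), Nat.add_sub_cancel]

lemma finrank_restrictSupport_degree_le (k : ℕ) :
    finrank K (restrictSupport K {μ : Fin 2 →₀ ℕ | μ.degree ≤ k}) = (k + 2).choose 2 := by
  have hs : {μ : Fin 2 →₀ ℕ | μ.degree ≤ k} =
      ↑((Finset.range (k + 1)).biUnion (Finset.univ : Finset (Fin 2)).finsuppAntidiag) := by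
    ext μ
    simp [Finset.mem_finsuppAntidiag, Finsupp.degree_eq_sum]
  rw [finrank_eq_nat_card_basis (basisRestrictSupport K _), hs, Nat.card_coe_set_eq,
    Set.ncard_coe_finset, Finset.card_biUnion, Nat.choose_two_right, ← Finset.sum_range_id,
    Finset.sum_range_succ' (fun i => i), add_zero]
  · refine Finset.sum_congr rfl fun n _ => ?_
    rw [Finset.card_finsuppAntidiag_nat_eq_choose, Finset.card_univ, Fintype.card_fin,
      show 2 + n - 1 = n + 1 by omega, Nat.choose_succ_self_right]
  · intro m _ n _ hmn
    exact Finset.disjoint_left.mpr fun μ hm hn => hmn <|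
      (Finset.mem_finsuppAntidiag.mp hm).1.symm.trans (Finset.mem_finsuppAntidiag.mp hn).1

lemma span_X_fin_two_eq_idealOfVars :
    Ideal.span {(X 0 : MvPolynomial (Fin 2) K), X 1} = idealOfVars (Fin 2) K := by
  rw [idealOfVars]
  congr 1
  ext p
  simp [Fin.exists_fin_two, eq_comm]

end MvPolynomial

noncomputable section
namespace PunctualChain
variable {K : Type*} [Field K]

def pivot (k j : ℕ) : Fin 2 →₀ ℕ := Finsupp.single 0 (k - j) + Finsupp.single 1 j

lemma pivot_injective (k : ℕ) : Function.Injective (pivot k) := fun j j' h => by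
  simpa [pivot] using DFunLike.congr_fun h 1

lemma degree_pivot {k j : ℕ} (hj : j ≤ k) : (pivot k j).degree = k := by
  simpa [pivot, Finsupp.degree_eq_sum] using Nat.sub_add_cancel hj

/-- For `j < k + 1 - t`, `flagBasis c k t j` is the echelon basis, with pivots at the monomials
`x ^ (k - j) * y ^ j`, of the codimension-`t` member of the flag of degree-`k` forms. The next
member is the hyperplane spanned by `flagBasis c k t j + c (k - t) j • flagBasis c k t (k - t)`,
`j < k - t`, so `c (k - t) j` are its coordinates in a chart of hyperplanes. -/
def flagBasis (c : ℕ → ℕ → K) (k : ℕ) : ℕ → ℕ → MvPolynomial (Fin 2) K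
  | 0, j => monomial (pivot k j) 1
  | t + 1, j => flagBasis c k t j + c (k - t) j • flagBasis c k t (k - t)

def flag (c : ℕ → ℕ → K) (k d : ℕ) : Submodule K (MvPolynomial (Fin 2) K) :=
  Submodule.span K (Set.range fun j : Fin d => flagBasis c k (k + 1 - d) j)

def pivotCoords (k d : ℕ) : MvPolynomial (Fin 2) K →ₗ[K] Fin d → K :=
  LinearMap.pi fun j => lcoeff K (pivot k j)

variable {c : ℕ → ℕ → K} {k : ℕ}

lemma coeff_pivot_flagBasis {t j j' : ℕ} (hj : j < k + 1 - t) (hj' : j' < k + 1 - t) :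
    coeff (pivot k j') (flagBasis c k t j) = if j = j' then 1 else 0 := by
  induction t generalizing j with
  | zero => simp [flagBasis, coeff_monomial, (pivot_injective k).eq_iff]
  | succ t ih =>
    rw [flagBasis, coeff_add, coeff_smul, ih (by omega) (by omega), ih (by omega) (by omega)]
    simp [show k - t ≠ j' by omega]

lemma coeff_pivot_flagBasis_of_lt {d j : ℕ} (hj : j < d) (hd : d ≤ k) :
    coeff (pivot k d) (flagBasis c k (k + 1 - d) j) = c d j := by
  obtain ⟨t, ht⟩ : ∃ t, k + 1 - d = t + 1 := ⟨k - d, by omega⟩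
  obtain rfl : d = k - t := by omega
  rw [ht, flagBasis, coeff_add, coeff_smul, coeff_pivot_flagBasis (by omega) (by omega),
    coeff_pivot_flagBasis (by omega) (by omega)]
  simp [show j ≠ k - t by omega]

lemma pivotCoords_flagBasis {d : ℕ} (hd : d ≤ k + 1) (j : Fin d) :
    pivotCoords k d (flagBasis c k (k + 1 - d) j) = Pi.single j 1 := by
  ext j'
  simp [pivotCoords, coeff_pivot_flagBasis (show (j : ℕ) < k + 1 - (k + 1 - d) by omega)
    (show (j' : ℕ) < k + 1 - (k + 1 - d) by omega), Pi.single_apply, Fin.val_inj, eq_comm]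

lemma flagBasis_mem_homogeneousSubmodule {t j : ℕ} (hj : j ≤ k) :
    flagBasis c k t j ∈ homogeneousSubmodule (Fin 2) K k := by
  induction t generalizing j with
  | zero => exact isHomogeneous_monomial _ (degree_pivot hj)
  | succ t ih => exact Submodule.add_mem _ (ih hj) (Submodule.smul_mem _ _ (ih (Nat.sub_le k t)))

lemma flag_le_homogeneousSubmodule {d : ℕ} (hd : d ≤ k + 1) :
    flag c k d ≤ homogeneousSubmodule (Fin 2) K k :=
  Submodule.span_le.mpr <| Set.range_subset_iff.mpr fun j =>
    flagBasis_mem_homogeneousSubmodule (by omega)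

@[simp] lemma flag_zero : flag c k 0 = ⊥ := by simp [flag]

lemma flag_le_flag_succ {d : ℕ} (hd : d ≤ k) : flag c k d ≤ flag c k (d + 1) := by
  refine Submodule.span_le.mpr <| Set.range_subset_iff.mpr fun j => ?_
  have hmem (j' : ℕ) (hj' : j' < d + 1) : flagBasis c k (k - d) j' ∈ flag c k (d + 1) :=
    Submodule.subset_span ⟨⟨j', hj'⟩, by simp only [show k + 1 - (d + 1) = k - d by omega]⟩
  rw [show k + 1 - d = k - d + 1 by omega, flagBasis, show k - (k - d) = d by omega]
  exact Submodule.add_mem _ (hmem j (by omega)) (Submodule.smul_mem _ _ (hmem d d.lt_succ_self))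

lemma finrank_flag {d : ℕ} (hd : d ≤ k + 1) : finrank K (flag c k d) = d := by
  rw [flag, finrank_span_eq_card (linearIndependent_of_map_eq_single _ (pivotCoords_flagBasis hd)),
    Fintype.card_fin]

lemma eq_of_flag_eq {c' : ℕ → ℕ → K} {d j : ℕ} (hj : j < d) (hd : d ≤ k)
    (h : flag c k d = flag c' k d) : c d j = c' d j := by
  have hbasis := eq_of_span_eq_of_map_eq_single (pivotCoords k d)
    (pivotCoords_flagBasis (c := c) (by omega)) (pivotCoords_flagBasis (c := c') (by omega)) h
  calc c d j = coeff (pivot k d) (flagBasis c k (k + 1 - d) j) :=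
        (coeff_pivot_flagBasis_of_lt hj hd).symm
    _ = coeff (pivot k d) (flagBasis c' k (k + 1 - d) j) := congrArg _ (congrFun hbasis ⟨j, hj⟩)
    _ = c' d j := coeff_pivot_flagBasis_of_lt hj hd

def chainDegree : Fin 23 → ℕ :=
  ![0, 1, 1, 2, 2, 2, 3, 3, 3, 3, 4, 4, 4, 4, 4, 5, 5, 5, 5, 5, 5, 6, 6]

def chainDim : Fin 23 → ℕ :=
  ![0, 1, 0, 2, 1, 0, 3, 2, 1, 0, 4, 3, 2, 1, 0, 5, 4, 3, 2, 1, 0, 6, 5]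

/-- The coordinates are numbered by increasing `k`, and for fixed `k` by decreasing `d`. -/
def paramIndex (k d j : ℕ) : Fin 46 :=
  Fin.ofNat 46 ((k + 2).choose 3 - (d + 1).choose 2 + j)

def chainFlag (a : Fin 46 → K) (i : Fin 23) : Submodule K (MvPolynomial (Fin 2) K) :=
  flag (fun d j => a (paramIndex (chainDegree i) d j)) (chainDegree i) (chainDim i)

def chainIdeal (a : Fin 46 → K) (i : Fin 23) : Ideal (MvPolynomial (Fin 2) K) :=
  idealOfForms (chainDegree i) (chainFlag a i)

lemma chainDim_le (i : Fin 23) : chainDim i ≤ chainDegree i + 1 := by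
  revert i; decide

lemma chainDegree_le (i : Fin 23) : chainDegree i ≤ 6 := by
  revert i; decide

lemma chainDegree_ne_zero_or_chainDim_eq_zero (i : Fin 23) :
    chainDegree i ≠ 0 ∨ chainDim i = 0 := by
  revert i; decide

lemma chain_succ (i : Fin 22) :
    chainDegree i.succ = chainDegree i.castSucc ∧ chainDim i.succ + 1 = chainDim i.castSucc ∨
      chainDegree i.succ = chainDegree i.castSucc + 1 := by
  revert i; decide

lemma choose_chainDegree_sub_chainDim (i : Fin 23) :
    (chainDegree i + 2).choose 2 - chainDim i = i + 1 := by
  revert i; decide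

lemma exists_paramIndex_eq (x : Fin 46) : ∃ i : Fin 23, ∃ j : Fin 7,
    (j : ℕ) < chainDim i ∧ chainDim i ≤ chainDegree i ∧
      paramIndex (chainDegree i) (chainDim i) j = x := by
  revert x; decide

lemma chainFlag_le_homogeneousSubmodule (a : Fin 46 → K) (i : Fin 23) :
    chainFlag a i ≤ homogeneousSubmodule (Fin 2) K (chainDegree i) :=
  flag_le_homogeneousSubmodule (chainDim_le i)

lemma chainIdeal_antitone (a : Fin 46 → K) : Antitone (chainIdeal a) := by
  refine Fin.antitone_iff_succ_le.mpr fun i => ?_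
  rcases chain_succ i with ⟨hk, hd⟩ | hk
  · rw [chainIdeal, chainIdeal, chainFlag, chainFlag, hk, ← hd]
    exact idealOfForms_mono (flag_le_flag_succ (by have := chainDim_le i.castSucc; omega))
  · rw [chainIdeal, chainIdeal, hk]
    exact idealOfForms_succ_le (hk ▸ chainFlag_le_homogeneousSubmodule a i.succ) _

lemma pow_le_chainIdeal (a : Fin 46 → K) (i : Fin 23) :
    idealOfVars (Fin 2) K ^ 7 ≤ chainIdeal a i :=
  pow_idealOfVars_le_idealOfForms (by have := chainDegree_le i; omega) _

lemma chainIdeal_le_idealOfVars (a : Fin 46 → K) (i : Fin 23) :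
    chainIdeal a i ≤ idealOfVars (Fin 2) K := by
  refine idealOfForms_le_idealOfVars ?_
  rcases chainDegree_ne_zero_or_chainDim_eq_zero i with hk | hd
  · exact (chainFlag_le_homogeneousSubmodule a i).trans fun p hp =>
      Ideal.pow_le_self hk (mem_pow_idealOfVars_of_isHomogeneous hp)
  · simp [chainFlag, hd]

lemma finrank_quotient_chainIdeal (a : Fin 46 → K) (i : Fin 23) :
    finrank K (MvPolynomial (Fin 2) K ⧸ chainIdeal a i) = i + 1 := by
  rw [chainIdeal, finrank_quotient_idealOfForms (chainFlag_le_homogeneousSubmodule a i),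
    finrank_restrictSupport_degree_le, chainFlag, finrank_flag (chainDim_le i),
    choose_chainDegree_sub_chainDim]

lemma chainIdeal_injective : Function.Injective (chainIdeal (K := K)) := by
  intro a a' h
  have hflag (i : Fin 23) : chainFlag a i = chainFlag a' i := by
    rw [← restrictScalars_idealOfForms_inf_restrictSupport
        (chainFlag_le_homogeneousSubmodule a i),
      ← restrictScalars_idealOfForms_inf_restrictSupport (chainFlag_le_homogeneousSubmodule a' i)]
    exact congrArg (fun I : Ideal _ => I.restrictScalars K ⊓ _) (congrFun h i)
  funext x
  obtain ⟨i, j, hj, hd, rfl⟩ := exists_paramIndex_eq x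
  exact eq_of_flag_eq hj hd (hflag i)

end PunctualChain
end

/-- With `R = ℂ[x,y]` and `m = (x,y)`, there is an injective map from
`ℂ^46` to chains of ideals of `R`, sending a parameter tuple to a chain
`I_1 ⊇ I_2 ⊇ ⋯ ⊇ I_23` such that for every parameter: (i) `m^7 ⊆ I_i ⊆ m` for all `i`
(so each `I_i` defines a subscheme of `𝔸²` supported only at the origin), and
(ii) `dim_ℂ (ℂ[x,y]/I_i) = i` for `1 ≤ i ≤ 23`.  (Here the chain is indexed by
`Fin 23`, with the `i`-th ideal having colength `i + 1`.) -/
theorem exists_injective_family_of_punctual_chains :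
    ∀ m : Ideal (MvPolynomial (Fin 2) ℂ),
      m = Ideal.span {X 0, X 1} →
      ∃ F : (Fin 46 → ℂ) → (Fin 23 → Ideal (MvPolynomial (Fin 2) ℂ)),
        Function.Injective F ∧
        ∀ a : Fin 46 → ℂ,
          (∀ i k : Fin 23, i ≤ k → F a k ≤ F a i) ∧
          (∀ i : Fin 23, m ^ 7 ≤ F a i ∧ F a i ≤ m) ∧
          (∀ i : Fin 23,
            Module.finrank ℂ (MvPolynomial (Fin 2) ℂ ⧸ F a i) = (i : ℕ) + 1) := by
  rintro m rfl
  rw [span_X_fin_two_eq_idealOfVars]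
  open PunctualChain in
  exact ⟨chainIdeal, chainIdeal_injective, fun a =>
    ⟨fun i k h => chainIdeal_antitone a h, fun i => ⟨pow_le_chainIdeal a i,
      chainIdeal_le_idealOfVars a i⟩, finrank_quotient_chainIdeal a⟩⟩
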